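/- arXiv:2203.11470 — 9 statements merged into one kernel-verified Lean document; each statement's English description precedes it below -/
import Mathlib

section
/- Let 𝒳 ⊆ ℝⁿ be open, let f : ℝⁿ → ℝⁿ and g : ℝⁿ → Matrix (Fin n) (Fin m) ℝ be locally Lipschitz continuous on 𝒳, and let K ⊆ 𝒳 be compact. Fix T > 0, p ∈ ℕ with p ≥ 1, Runge–Kutta weights b₁,…,b_p ≥ 0 with Σᵢ bᵢ = 1, and coefficients a_{i,j} ∈ ℝ (1 ≤ j < i ≤ p). Let {k_h : 𝒳 → ℝᵐ | h ∈ (0,T]} be a family of maps and suppose there exist h₁ ∈ (0,T] and M_K ≥ 0 such that ‖k_h(x)‖ ≤ M_K for every h ∈ (0,h₁) and x ∈ K. Then there exist h* ∈ (0,h₁] and a function ρ : ℝ → ℝ that is continuous, strictly increasing on [0,∞), satisfies ρ(0) = 0 and ρ(r) → ∞ as r → ∞, such that for every h ∈ (0,h*), every x ∈ K, and every differentiable φ : [0,h] → ℝⁿ with φ(0) = x, φ(t) ∈ 𝒳 and φ′(t) = f(φ(t)) + g(φ(t))·k_h(x) for all t ∈ [0,h], one has ‖φ(h) − F^{a,p}_h(x,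 k_h(x))‖ ≤ h·ρ(h). -/
attribute [local instance] Matrix.normedAddCommGroup

/-- Matrix–vector multiplication as a map between Euclidean spaces. -/
noncomputable def mulVecE {n m : ℕ} (g : Matrix (Fin n) (Fin m) ℝ)
    (u : EuclideanSpace ℝ (Fin m)) : EuclideanSpace ℝ (Fin n) :=
  (WithLp.equiv 2 (Fin n → ℝ)).symm (g.mulVec ((WithLp.equiv 2 (Fin m → ℝ)) u))

/-- Runge–Kutta stage points (0-indexed): `z 0 = x`,
`z i = x + h • Σ_{j<i} a i j • v j (z j)`. -/
noncomputable def rkStages {S : Type*} [AddCommGroup S] [Module ℝ S]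
    (v : ℕ → S → S) (a : ℕ → ℕ → ℝ) (h : ℝ) (x : S) : ℕ → S :=
  fun i => Nat.strongRecOn i fun i ih =>
    x + h • ∑ j ∈ (Finset.range i).attach, a i j.1 • v j.1 (ih j.1 (Finset.mem_range.mp j.2))

/-- The `p`-stage Runge–Kutta map `F^{a,p}_h(x,u)` for `ẋ = f(x) + g(x)u`. -/
noncomputable def rkMap {n m : ℕ} (f : EuclideanSpace ℝ (Fin n) → EuclideanSpace ℝ (Fin n))
    (g : EuclideanSpace ℝ (Fin n) → Matrix (Fin n) (Fin m) ℝ)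
    (p : ℕ) (b : ℕ → ℝ) (a : ℕ → ℕ → ℝ) (h : ℝ)
    (x : EuclideanSpace ℝ (Fin n)) (u : EuclideanSpace ℝ (Fin m)) : EuclideanSpace ℝ (Fin n) :=
  x + h • ∑ i ∈ Finset.range p,
    b i • (f (rkStages (fun _ z => f z + mulVecE (g z) u) a h x i)
      + mulVecE (g (rkStages (fun _ z => f z + mulVecE (g z) u) a h x i)) u)

/-! On a compact thickening of `K` inside `𝒳`, the fields `z ↦ f z + g z u` with `‖u‖ ≤ M_K`
are uniformly bounded by some `M` and uniformly `L`-Lipschitz. For small `h` the exact solution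
stays within `M t` of `x` and the Runge–Kutta stages within `A M h` of `x`, where
`A = ∑_{j < i < p} |a i j|`, so both the exact step and the Runge–Kutta step differ from the Euler
step `x + h (f x + g x u)` by `O(h²)`. Hence `ρ h = (L M (1 + A) + 1) h` works. -/

open Metric Set

lemma rkStages_eq {S : Type*} [AddCommGroup S] [Module ℝ S]
    (v : ℕ → S → S) (a : ℕ → ℕ → ℝ) (h : ℝ) (x : S) (i : ℕ) :
    rkStages v a h x i = x + h • ∑ j ∈ Finset.range i, a i j • v j (rkStages v a h x j) := by
  rw [rkStages, Nat.strongRecOn_eq]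
  exact congrArg (x + h • ·)
    (Finset.sum_attach (Finset.range i) fun j => a i j • v j (rkStages v a h x j))

section OneStep

variable {E : Type*} [NormedAddCommGroup E] [NormedSpace ℝ E]
  {v : E → E} {φ : ℝ → E} {x : E} {r M h : ℝ} {L : NNReal}

/-- The barrier `t ↦ M * t` can only be reached while `φ` is still in the ball, where its speed
is `< M`. -/
lemma norm_sub_le_mul_of_hasDerivWithinAt (hM : 0 ≤ M) (hMh : M * h ≤ r)
    (hv : ∀ z ∈ closedBall x r, ‖v z‖ < M) (hφ0 : φ 0 = x)
    (hφ : ∀ t ∈ Icc 0 h, HasDerivWithinAt φ (v (φ t)) (Icc 0 h) t) :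
    ∀ t ∈ Icc 0 h, ‖φ t - x‖ ≤ M * t := by
  refine image_norm_le_of_norm_deriv_right_lt_deriv_boundary' (f := fun t => φ t - x)
    (fun t ht => (hφ t ht).continuousWithinAt.sub continuousWithinAt_const)
    (fun t ht => ((hφ t (Ico_subset_Icc_self ht)).mono_of_mem_nhdsWithin
      (Icc_mem_nhdsGE_of_mem ht)).sub_const x)
    (by simp [hφ0]) (continuous_const.mul continuous_id).continuousOn
    (fun t _ => by simpa using ((hasDerivAt_id t).const_mul M).hasDerivWithinAt) ?_
  intro t ht hφt
  refine hv _ (mem_closedBall_iff_norm.2 ?_)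
  rw [hφt]
  exact (mul_le_mul_of_nonneg_left ht.2.le hM).trans hMh

lemma norm_sub_sub_smul_le_of_hasDerivWithinAt (hh : 0 ≤ h) (hM : 0 ≤ M) (hMh : M * h ≤ r)
    (hv : ∀ z ∈ closedBall x r, ‖v z‖ < M) (hL : LipschitzOnWith L v (closedBall x r))
    (hφ0 : φ 0 = x) (hφ : ∀ t ∈ Icc 0 h, HasDerivWithinAt φ (v (φ t)) (Icc 0 h) t) :
    ‖φ h - x - h • v x‖ ≤ L * M * h ^ 2 := by
  have hφx := norm_sub_le_mul_of_hasDerivWithinAt hM hMh hv hφ0 hφ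
  have hr : 0 ≤ r := (mul_nonneg hM hh).trans hMh
  have hφball : ∀ t ∈ Icc 0 h, φ t ∈ closedBall x r := fun t ht =>
    mem_closedBall_iff_norm.2 <| (hφx t ht).trans <|
      (mul_le_mul_of_nonneg_left ht.2 hM).trans hMh
  have key := norm_image_sub_le_of_norm_deriv_le_segment' (f := fun t => φ t - t • v x)
    (C := L * (M * h))
    (fun t ht => (hφ t ht).sub (((hasDerivAt_id t).smul_const (v x)).hasDerivWithinAt))
    (fun t ht => ?_) h (right_mem_Icc.2 hh)
  · simp only [hφ0, zero_smul, sub_zero] at key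
    calc ‖φ h - x - h • v x‖ = ‖φ h - h • v x - x‖ := by rw [sub_right_comm]
      _ ≤ L * (M * h) * h := key
      _ = L * M * h ^ 2 := by ring
  · have ht' := Ico_subset_Icc_self ht
    rw [one_smul]
    calc ‖v (φ t) - v x‖ ≤ L * ‖φ t - x‖ :=
          hL.norm_sub_le (hφball t ht') (mem_closedBall_self hr)
      _ ≤ L * (M * h) := by
          gcongr
          exact (hφx t ht').trans (mul_le_mul_of_nonneg_left ht'.2 hM)


variable {a : ℕ → ℕ → ℝ} {b : ℕ → ℝ} {p : ℕ} {A : ℝ}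

lemma norm_rkStages_sub_le (hh : 0 ≤ h) (hM : 0 ≤ M)
    (hA : ∀ i < p, ∑ j ∈ Finset.range i, |a i j| ≤ A) (hAMh : A * M * h ≤ r)
    (hv : ∀ z ∈ closedBall x r, ‖v z‖ ≤ M) :
    ∀ i < p, ‖rkStages (fun _ => v) a h x i - x‖ ≤ A * M * h := by
  intro i
  induction i using Nat.strong_induction_on with
  | _ i ih =>
    intro hi
    have hstage : ∀ j ∈ Finset.range i, ‖v (rkStages (fun _ => v) a h x j)‖ ≤ M := fun j hj =>
      hv _ <| mem_closedBall_iff_norm.2 <|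
        (ih j (Finset.mem_range.1 hj) ((Finset.mem_range.1 hj).trans hi)).trans hAMh
    rw [rkStages_eq, add_sub_cancel_left, norm_smul, Real.norm_of_nonneg hh]
    calc h * ‖∑ j ∈ Finset.range i, a i j • v (rkStages (fun _ => v) a h x j)‖
        ≤ h * ∑ j ∈ Finset.range i, |a i j| * M := by
          gcongr
          refine norm_sum_le_of_le _ fun j hj => ?_
          rw [norm_smul, Real.norm_eq_abs]
          gcongr
          exact hstage j hj
      _ ≤ h * (A * M) := by
          rw [← Finset.sum_mul]
          gcongr
          exact hA i hi
      _ = A * M * h := by ring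

lemma norm_rk_sub_sub_smul_le (hh : 0 ≤ h) (hM : 0 ≤ M)
    (hb : ∀ i ∈ Finset.range p, 0 ≤ b i) (hbsum : ∑ i ∈ Finset.range p, b i = 1)
    (hA : ∀ i < p, ∑ j ∈ Finset.range i, |a i j| ≤ A) (hAMh : A * M * h ≤ r)
    (hv : ∀ z ∈ closedBall x r, ‖v z‖ ≤ M) (hL : LipschitzOnWith L v (closedBall x r)) :
    ‖x + h • ∑ i ∈ Finset.range p, b i • v (rkStages (fun _ => v) a h x i) - x - h • v x‖
      ≤ L * (A * M) * h ^ 2 := by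
  set z := rkStages (fun _ => v) a h x
  have hz := norm_rkStages_sub_le hh hM hA hAMh hv
  have hp : 0 < p := Nat.pos_of_ne_zero fun hp => by simp [hp] at hbsum
  have hr : 0 ≤ r := (norm_nonneg _).trans ((hz 0 hp).trans hAMh)
  have hzv : ∀ i ∈ Finset.range p, ‖v (z i) - v x‖ ≤ L * (A * M) * h := fun i hi => by
    have hi := Finset.mem_range.1 hi
    calc ‖v (z i) - v x‖ ≤ L * ‖z i - x‖ :=
          hL.norm_sub_le (mem_closedBall_iff_norm.2 ((hz i hi).trans hAMh))
            (mem_closedBall_self hr)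
      _ ≤ L * (A * M * h) := by gcongr; exact hz i hi
      _ = L * (A * M) * h := by ring
  have hsplit : x + h • ∑ i ∈ Finset.range p, b i • v (z i) - x - h • v x
      = h • ∑ i ∈ Finset.range p, b i • (v (z i) - v x) := by
    simp only [smul_sub, Finset.sum_sub_distrib, ← Finset.sum_smul, hbsum, one_smul]
    abel
  rw [hsplit, norm_smul, Real.norm_of_nonneg hh]
  calc h * ‖∑ i ∈ Finset.range p, b i • (v (z i) - v x)‖
      ≤ h * ∑ i ∈ Finset.range p, b i * (L * (A * M) * h) := by
        gcongr
        refine norm_sum_le_of_le _ fun i hi => ?_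
        rw [norm_smul, Real.norm_of_nonneg (hb i hi)]
        exact mul_le_mul_of_nonneg_left (hzv i hi) (hb i hi)
    _ = L * (A * M) * h ^ 2 := by rw [← Finset.sum_mul, hbsum]; ring

theorem norm_sub_rk_le_of_hasDerivWithinAt (hh : 0 ≤ h) (hM : 0 ≤ M) (hA0 : 0 ≤ A)
    (hb : ∀ i ∈ Finset.range p, 0 ≤ b i) (hbsum : ∑ i ∈ Finset.range p, b i = 1)
    (hA : ∀ i < p, ∑ j ∈ Finset.range i, |a i j| ≤ A) (hMh : M * (1 + A) * h ≤ r)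
    (hv : ∀ z ∈ closedBall x r, ‖v z‖ < M) (hL : LipschitzOnWith L v (closedBall x r))
    (hφ0 : φ 0 = x) (hφ : ∀ t ∈ Icc 0 h, HasDerivWithinAt φ (v (φ t)) (Icc 0 h) t) :
    ‖φ h - (x + h • ∑ i ∈ Finset.range p, b i • v (rkStages (fun _ => v) a h x i))‖
      ≤ L * M * (1 + A) * h ^ 2 := by
  have hMh₀ : 0 ≤ M * h := by positivity
  have hAMh₀ : 0 ≤ A * M * h := by positivity
  have hexact := norm_sub_sub_smul_le_of_hasDerivWithinAt hh hM (by linarith) hv hL hφ0 hφ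
  have hrk := norm_rk_sub_sub_smul_le hh hM hb hbsum hA (by linarith)
    (fun z hz => (hv z hz).le) hL
  set y := x + h • ∑ i ∈ Finset.range p, b i • v (rkStages (fun _ => v) a h x i)
  calc ‖φ h - y‖ = ‖(φ h - x - h • v x) - (y - x - h • v x)‖ := by congr 1; abel
    _ ≤ ‖φ h - x - h • v x‖ + ‖y - x - h • v x‖ := norm_sub_le _ _
    _ ≤ L * M * h ^ 2 + L * (A * M) * h ^ 2 := add_le_add hexact hrk
    _ = L * M * (1 + A) * h ^ 2 := by ring

end OneStep

lemma exists_norm_mulVecE_le (n m : ℕ) :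
    ∃ C : NNReal, ∀ (A : Matrix (Fin n) (Fin m) ℝ) (u : EuclideanSpace ℝ (Fin m)),
      ‖mulVecE A u‖ ≤ C * ‖A‖ * ‖u‖ := by
  -- `Fin n → Fin m → ℝ` carries the same sup norm as `Matrix`, together with a `NormedSpace`
  -- structure compatible with its topology.
  let Φ : (Fin n → Fin m → ℝ) →L[ℝ] EuclideanSpace ℝ (Fin m) →L[ℝ] EuclideanSpace ℝ (Fin n) :=
    LinearMap.toContinuousLinearMap
      (LinearMap.toContinuousLinearMap.toLinearMap ∘ₗ Matrix.toEuclideanLin.toLinearMap)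
  exact ⟨‖Φ‖₊, fun A u => Φ.le_opNorm₂ A u⟩

lemma mulVecE_sub {n m : ℕ} (A B : Matrix (Fin n) (Fin m) ℝ) (u : EuclideanSpace ℝ (Fin m)) :
    mulVecE (A - B) u = mulVecE A u - mulVecE B u := by
  simp [mulVecE, Matrix.sub_mulVec]

lemma IsCompact.exists_lipschitzOnWith_bound_controlAffine {n m : ℕ}
    {f : EuclideanSpace ℝ (Fin n) → EuclideanSpace ℝ (Fin n)}
    {g : EuclideanSpace ℝ (Fin n) → Matrix (Fin n) (Fin m) ℝ} {S : Set (EuclideanSpace ℝ (Fin n))}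
    (hS : IsCompact S) (hf : LocallyLipschitzOn S f) (hg : LocallyLipschitzOn S g) (R : NNReal) :
    ∃ L : NNReal, ∃ M > 0, ∀ u : EuclideanSpace ℝ (Fin m), ‖u‖ ≤ R →
      LipschitzOnWith L (fun z => f z + mulVecE (g z) u) S ∧
        ∀ z ∈ S, ‖f z + mulVecE (g z) u‖ < M := by
  obtain ⟨C, hC⟩ := exists_norm_mulVecE_le n m
  obtain ⟨Lf, hLf⟩ := hf.exists_lipschitzOnWith_of_compact hS
  obtain ⟨Lg, hLg⟩ := hg.exists_lipschitzOnWith_of_compact hS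
  obtain ⟨Mf, hMf⟩ := hS.exists_bound_of_continuousOn hf.continuousOn
  obtain ⟨Mg, hMg⟩ := hS.exists_bound_of_continuousOn hg.continuousOn
  refine ⟨Lf + C * Lg * R, max Mf 0 + C * max Mg 0 * R + 1, by positivity, fun u hu => ⟨?_, ?_⟩⟩
  · refine hLf.add (LipschitzOnWith.of_dist_le_mul fun y hy z hz => ?_)
    rw [dist_eq_norm, dist_eq_norm, ← mulVecE_sub]
    calc ‖mulVecE (g y - g z) u‖ ≤ C * ‖g y - g z‖ * ‖u‖ := hC _ _
      _ ≤ C * (Lg * ‖y - z‖) * R := by gcongr; exact hLg.norm_sub_le hy hz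
      _ = ↑(C * Lg * R) * ‖y - z‖ := by push_cast; ring
  · intro z hz
    calc ‖f z + mulVecE (g z) u‖ ≤ ‖f z‖ + C * ‖g z‖ * ‖u‖ :=
          (norm_add_le _ _).trans (by gcongr; exact hC _ _)
      _ ≤ max Mf 0 + C * max Mg 0 * R := by
          gcongr
          · exact (hMf z hz).trans (le_max_left _ _)
          · exact (hMg z hz).trans (le_max_left _ _)
      _ < _ := lt_add_one _

theorem stmt1_general {n m : ℕ} (𝒳 : Set (EuclideanSpace ℝ (Fin n))) (hXopen : IsOpen 𝒳)
    (f : EuclideanSpace ℝ (Fin n) → EuclideanSpace ℝ (Fin n))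
    (g : EuclideanSpace ℝ (Fin n) → Matrix (Fin n) (Fin m) ℝ)
    (hf : ∀ x ∈ 𝒳, ∃ L : NNReal, ∃ t ∈ nhdsWithin x 𝒳, LipschitzOnWith L f t)
    (hg : ∀ x ∈ 𝒳, ∃ L : NNReal, ∃ t ∈ nhdsWithin x 𝒳, LipschitzOnWith L g t)
    (K : Set (EuclideanSpace ℝ (Fin n))) (hK : IsCompact K) (hKX : K ⊆ 𝒳)
    (T : ℝ) (p : ℕ)
    (b : ℕ → ℝ) (hb : ∀ i ∈ Finset.range p, 0 ≤ b i)
    (hbsum : ∑ i ∈ Finset.range p, b i = 1)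
    (a : ℕ → ℕ → ℝ)
    (k : ℝ → EuclideanSpace ℝ (Fin n) → EuclideanSpace ℝ (Fin m))
    (h₁ : ℝ) (hh₁ : h₁ ∈ Set.Ioc 0 T) (MK : ℝ) (hMK : 0 ≤ MK)
    (hkbd : ∀ h ∈ Set.Ioo (0:ℝ) h₁, ∀ x ∈ K, ‖k h x‖ ≤ MK) :
    ∃ hstar ∈ Set.Ioc (0:ℝ) h₁, ∃ ρ : ℝ → ℝ,
      Continuous ρ ∧ StrictMonoOn ρ (Set.Ici 0) ∧ ρ 0 = 0 ∧
      Filter.Tendsto ρ Filter.atTop Filter.atTop ∧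
      ∀ h ∈ Set.Ioo (0:ℝ) hstar, ∀ x ∈ K, ∀ φ : ℝ → EuclideanSpace ℝ (Fin n),
        φ 0 = x →
        (∀ t ∈ Set.Icc (0:ℝ) h, φ t ∈ 𝒳) →
        (∀ t ∈ Set.Icc (0:ℝ) h,
          HasDerivWithinAt φ (f (φ t) + mulVecE (g (φ t)) (k h x)) (Set.Icc (0:ℝ) h) t) →
        ‖φ h - rkMap f g p b a h x (k h x)‖ ≤ h * ρ h := by
  obtain ⟨r, hr, hKr⟩ := hK.exists_cthickening_subset_open hXopen hKX
  have hfK : LocallyLipschitzOn (cthickening r K) f :=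
    LocallyLipschitzOn.mono (fun x hx => hf x hx) hKr
  have hgK : LocallyLipschitzOn (cthickening r K) g :=
    LocallyLipschitzOn.mono (fun x hx => hg x hx) hKr
  obtain ⟨L, M, hM, hLM⟩ :=
    hK.cthickening.exists_lipschitzOnWith_bound_controlAffine hfK hgK ⟨MK, hMK⟩
  set A := ∑ i ∈ Finset.range p, ∑ j ∈ Finset.range i, |a i j|
  have hA0 : 0 ≤ A := by positivity
  have hA : ∀ i < p, ∑ j ∈ Finset.range i, |a i j| ≤ A := fun i hi =>
    Finset.single_le_sum (f := fun i => ∑ j ∈ Finset.range i, |a i j|)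
      (fun i _ => by positivity) (Finset.mem_range.2 hi)
  have hc : 0 < L * M * (1 + A) + 1 := by positivity
  refine ⟨min h₁ (r / (M * (1 + A))), ⟨lt_min hh₁.1 (by positivity), min_le_left _ _⟩,
    fun s => (L * M * (1 + A) + 1) * s, continuous_const.mul continuous_id,
    fun s _ t _ hst => mul_lt_mul_of_pos_left hst hc, mul_zero _,
    Filter.tendsto_id.const_mul_atTop hc, ?_⟩
  intro h hh x hx φ hφ0 _ hφ
  have hMh : M * (1 + A) * h ≤ r := by
    have := hh.2.trans_le (min_le_right _ _)
    rw [lt_div_iff₀ (by positivity)] at this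
    linarith
  obtain ⟨hL, hv⟩ := hLM (k h x) (hkbd h ⟨hh.1, hh.2.trans_le (min_le_left _ _)⟩ x hx)
  have hball : closedBall x r ⊆ cthickening r K := closedBall_subset_cthickening hx r
  calc ‖φ h - rkMap f g p b a h x (k h x)‖ ≤ L * M * (1 + A) * h ^ 2 :=
        norm_sub_rk_le_of_hasDerivWithinAt (v := fun z => f z + mulVecE (g z) (k h x))
          hh.1.le hM.le hA0 hb hbsum hA hMh (fun z hz => hv z (hball hz)) (hL.mono hball)
          hφ0 hφ
    _ ≤ h * ((L * M * (1 + A) + 1) * h) := by linarith [sq_nonneg h]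

theorem stmt1 {n m : ℕ} (𝒳 : Set (EuclideanSpace ℝ (Fin n))) (hXopen : IsOpen 𝒳)
    (f : EuclideanSpace ℝ (Fin n) → EuclideanSpace ℝ (Fin n))
    (g : EuclideanSpace ℝ (Fin n) → Matrix (Fin n) (Fin m) ℝ)
    (hf : ∀ x ∈ 𝒳, ∃ L : NNReal, ∃ t ∈ nhdsWithin x 𝒳, LipschitzOnWith L f t)
    (hg : ∀ x ∈ 𝒳, ∃ L : NNReal, ∃ t ∈ nhdsWithin x 𝒳, LipschitzOnWith L g t)
    (K : Set (EuclideanSpace ℝ (Fin n))) (hK : IsCompact K) (hKX : K ⊆ 𝒳)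
    (T : ℝ) (hT : 0 < T) (p : ℕ) (hp : 1 ≤ p)
    (b : ℕ → ℝ) (hb : ∀ i ∈ Finset.range p, 0 ≤ b i)
    (hbsum : ∑ i ∈ Finset.range p, b i = 1)
    (a : ℕ → ℕ → ℝ)
    (k : ℝ → EuclideanSpace ℝ (Fin n) → EuclideanSpace ℝ (Fin m))
    (h₁ : ℝ) (hh₁ : h₁ ∈ Set.Ioc 0 T) (MK : ℝ) (hMK : 0 ≤ MK)
    (hkbd : ∀ h ∈ Set.Ioo (0:ℝ) h₁, ∀ x ∈ K, ‖k h x‖ ≤ MK) :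
    ∃ hstar ∈ Set.Ioc (0:ℝ) h₁, ∃ ρ : ℝ → ℝ,
      Continuous ρ ∧ StrictMonoOn ρ (Set.Ici 0) ∧ ρ 0 = 0 ∧
      Filter.Tendsto ρ Filter.atTop Filter.atTop ∧
      ∀ h ∈ Set.Ioo (0:ℝ) hstar, ∀ x ∈ K, ∀ φ : ℝ → EuclideanSpace ℝ (Fin n),
        φ 0 = x →
        (∀ t ∈ Set.Icc (0:ℝ) h, φ t ∈ 𝒳) →
        (∀ t ∈ Set.Icc (0:ℝ) h,
          HasDerivWithinAt φ (f (φ t) + mulVecE (g (φ t)) (k h x)) (Set.Icc (0:ℝ) h) t) →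
        ‖φ h - rkMap f g p b a h x (k h x)‖ ≤ h * ρ h :=
  stmt1_general 𝒳 hXopen f g hf hg K hK hKX T p b hb hbsum a k h₁ hh₁ MK hMK hkbd
end

section
/- Let 𝒳 ⊆ ℝⁿ be open and let s : ℝⁿ → ℝ be twice continuously differentiable on 𝒳. Suppose the 0-superlevel set C = {x ∈ 𝒳 : s(x) ≥ 0} is nonempty and compact, and that 0 is a regular value of s on 𝒳, i.e. for every x ∈ 𝒳 with s(x) = 0 the gradient ∇s(x) ≠ 0. Then, with distances taken in the Euclidean norm, there exists ε > 0 such that for every η > 0 there is δ > 0 with the property: for every x ∈ 𝒳 ∩ (C ⊕ B̄_ε), if d_C(x) > η then s(x) < −δ. -/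
theorem stmt2 {n : ℕ} (𝒳 : Set (EuclideanSpace ℝ (Fin n))) (hXopen : IsOpen 𝒳)
    (s : EuclideanSpace ℝ (Fin n) → ℝ) (hs : ContDiffOn ℝ 2 s 𝒳)
    (C : Set (EuclideanSpace ℝ (Fin n))) (hC : C = {x ∈ 𝒳 | 0 ≤ s x})
    (hCne : C.Nonempty) (hCcomp : IsCompact C)
    (hreg : ∀ x ∈ 𝒳, s x = 0 → gradient s x ≠ 0) :
    ∃ ε : ℝ, 0 < ε ∧ ∀ η : ℝ, 0 < η → ∃ δ : ℝ, 0 < δ ∧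
      ∀ x ∈ 𝒳 ∩ Metric.cthickening ε C, Metric.infDist x C > η → s x < -δ := by
  have hCsub : C ⊆ 𝒳 := by rw [hC]; exact fun x hx => hx.1
  obtain ⟨ε, hε, hεsub⟩ := hCcomp.exists_cthickening_subset_open hXopen hCsub
  refine ⟨ε, hε, fun η hη => ?_⟩
  set K : Set (EuclideanSpace ℝ (Fin n)) :=
    Metric.cthickening ε C ∩ {x | η ≤ Metric.infDist x C} with hK
  have hKcomp : IsCompact K :=
    (hCcomp.cthickening).inter_right
      (isClosed_le continuous_const (Metric.continuous_infDist_pt C))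
  have hKX : K ⊆ 𝒳 := fun x hx => hεsub hx.1
  have hneg : ∀ x ∈ K, s x < 0 := by
    intro x hx
    by_contra h
    push_neg at h
    have hxC : x ∈ C := by rw [hC]; exact ⟨hKX hx, h⟩
    have : Metric.infDist x C = 0 := Metric.infDist_zero_of_mem hxC
    have := hx.2
    simp only [Set.mem_setOf_eq] at this
    linarith
  rcases K.eq_empty_or_nonempty with hKe | hKne
  · refine ⟨1, one_pos, fun x hx hdist => ?_⟩
    exfalso
    have : x ∈ K := ⟨hx.2, le_of_lt hdist⟩
    rw [hKe] at this
    exact this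
  · obtain ⟨x₀, hx₀K, hmax⟩ :=
      hKcomp.exists_isMaxOn hKne ((hs.continuousOn).mono hKX)
    have hm : s x₀ < 0 := hneg x₀ hx₀K
    refine ⟨-s x₀ / 2, by linarith, fun x hx hdist => ?_⟩
    have hxK : x ∈ K := ⟨hx.2, le_of_lt hdist⟩
    have := hmax hxK
    simp only [Set.mem_setOf_eq] at this
    linarith
end

section
/- Let 𝒳 ⊆ ℝⁿ be open, C ⊆ 𝒳 nonempty, and T > 0. For each h ∈ (0,T] let s_h : ℝⁿ → ℝ, k_h : 𝒳 → ℝᵐ, and F_h, F^e_h : 𝒳 × ℝᵐ → ℝⁿ. Assume: (i) there exist h₁ ∈ (0,T], a continuous strictly increasing α : ℝ → ℝ with α(0) = 0, ε > 0, and M > 0 such that for every h ∈ (0,h₁): s_h > 0 on interior(C), s_h = 0 on frontier(C), s_h < 0 on 𝒳 \ C; h·α(s_h(x)) ≤ s_h(x) for all x ∈ C; and |s_h(a) − s_h(b)| ≤ M‖a − b‖ for all a, b ∈ 𝒳 ∩ (C ⊕ B̄_ε); (ii) for every η > 0 there exists δ > 0 such that for all h ∈ (0,h₁) and all x ∈ 𝒳,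 if d_C(x) > η then s_h(x) < −δ; (iii) for every h ∈ (0,h₁) and x ∈ 𝒳, s_h(F_h(x, k_h(x))) − s_h(x) ≥ −h·α(s_h(x)) and F_h(x, k_h(x)) ∈ 𝒳; (iv) there exist ε′ > 0, h₂ ∈ (0,T], and ρ : ℝ → ℝ continuous, strictly increasing on [0,∞), with ρ(0) = 0 and ρ(r) → ∞ as r → ∞, such that ‖F^e_h(x, k_h(x)) − F_h(x, k_h(x))‖ ≤ h·ρ(h) for all h ∈ (0,h₂) and x ∈ 𝒳 ∩ (C ⊕ B̄_{ε′}); (v) there exists h₃ ∈ (0,T] such that F^e_h(x, k_h(x)) ∈ 𝒳 for all h ∈ (0,h₃) and x ∈ 𝒳. Then for every R > 0 there exists h* ∈ (0,T] such that for every h ∈ (0,h*) there is a set C_h ⊆ 𝒳 with C ⊆ C_h ⊆ C ⊕ B̄_R and F^e_h(x, k_h(x)) ∈ C_h for every x ∈ C_h (hence every recursion x_{k+1} = F^e_h(x_k, k_h(x_k)) with x₀ ∈ C_h remains in C_h). -/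
lemma mem_cth {X : Type*} [PseudoMetricSpace X] {s : Set X} (hs : s.Nonempty) {δ : ℝ}
    (hδ : 0 ≤ δ) {x : X} : x ∈ Metric.cthickening δ s ↔ Metric.infDist x s ≤ δ := by
  rw [Metric.mem_cthickening_iff, Metric.infDist,
    ← ENNReal.le_ofReal_iff_toReal_le (Metric.infEdist_ne_top hs) hδ]

theorem stmt3 {n m : ℕ} (𝒳 : Set (EuclideanSpace ℝ (Fin n))) (hXopen : IsOpen 𝒳)
    (C : Set (EuclideanSpace ℝ (Fin n))) (hCX : C ⊆ 𝒳) (hCne : C.Nonempty)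
    (T : ℝ) (hT : 0 < T)
    (s : ℝ → EuclideanSpace ℝ (Fin n) → ℝ)
    (k : ℝ → EuclideanSpace ℝ (Fin n) → EuclideanSpace ℝ (Fin m))
    (F Fe : ℝ → EuclideanSpace ℝ (Fin n) × EuclideanSpace ℝ (Fin m) →
      EuclideanSpace ℝ (Fin n))
    -- (i)
    (h₁ : ℝ) (hh₁ : h₁ ∈ Set.Ioc 0 T)
    (α : ℝ → ℝ) (hαc : Continuous α) (hαm : StrictMono α) (hα0 : α 0 = 0)
    (ε M : ℝ) (hε : 0 < ε) (hM : 0 < M)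
    (hpos : ∀ h ∈ Set.Ioo (0:ℝ) h₁, ∀ x ∈ interior C, 0 < s h x)
    (hzero : ∀ h ∈ Set.Ioo (0:ℝ) h₁, ∀ x ∈ frontier C, s h x = 0)
    (hneg : ∀ h ∈ Set.Ioo (0:ℝ) h₁, ∀ x ∈ 𝒳 \ C, s h x < 0)
    (hclassK : ∀ h ∈ Set.Ioo (0:ℝ) h₁, ∀ x ∈ C, h * α (s h x) ≤ s h x)
    (hlip : ∀ h ∈ Set.Ioo (0:ℝ) h₁, ∀ a ∈ 𝒳 ∩ Metric.cthickening ε C,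
      ∀ b ∈ 𝒳 ∩ Metric.cthickening ε C, |s h a - s h b| ≤ M * ‖a - b‖)
    -- (ii)
    (hcoer : ∀ η : ℝ, 0 < η → ∃ δ : ℝ, 0 < δ ∧ ∀ h ∈ Set.Ioo (0:ℝ) h₁, ∀ x ∈ 𝒳,
      Metric.infDist x C > η → s h x < -δ)
    -- (iii)
    (hdec : ∀ h ∈ Set.Ioo (0:ℝ) h₁, ∀ x ∈ 𝒳,
      s h (F h (x, k h x)) - s h x ≥ -(h * α (s h x)) ∧ F h (x, k h x) ∈ 𝒳)
    -- (iv)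
    (ε' h₂ : ℝ) (hε' : 0 < ε') (hh₂ : h₂ ∈ Set.Ioc 0 T)
    (ρ : ℝ → ℝ) (hρc : Continuous ρ) (hρm : StrictMonoOn ρ (Set.Ici 0))
    (hρ0 : ρ 0 = 0) (hρtop : Filter.Tendsto ρ Filter.atTop Filter.atTop)
    (hcons : ∀ h ∈ Set.Ioo (0:ℝ) h₂, ∀ x ∈ 𝒳 ∩ Metric.cthickening ε' C,
      ‖Fe h (x, k h x) - F h (x, k h x)‖ ≤ h * ρ h)
    -- (v)
    (h₃ : ℝ) (hh₃ : h₃ ∈ Set.Ioc 0 T)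
    (hadm : ∀ h ∈ Set.Ioo (0:ℝ) h₃, ∀ x ∈ 𝒳, Fe h (x, k h x) ∈ 𝒳) :
    ∀ R : ℝ, 0 < R → ∃ hstar ∈ Set.Ioc (0:ℝ) T, ∀ h ∈ Set.Ioo (0:ℝ) hstar,
      ∃ Ch : Set (EuclideanSpace ℝ (Fin n)), Ch ⊆ 𝒳 ∧ C ⊆ Ch ∧
        Ch ⊆ Metric.cthickening R C ∧ ∀ x ∈ Ch, Fe h (x, k h x) ∈ Ch := by
  intro R hR
  have hmin : (0:ℝ) < min ε (min ε' R) := lt_min hε (lt_min hε' hR)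
  obtain ⟨η, hη_def⟩ : ∃ η : ℝ, η = min ε (min ε' R) / 2 := ⟨_, rfl⟩
  have hη : 0 < η := by rw [hη_def]; positivity
  have hηε : 2 * η ≤ ε := by
    have := min_le_left ε (min ε' R); simp only [hη_def]; linarith
  have hηε' : η ≤ ε' := by
    have h1 := min_le_right ε (min ε' R); have h2 := min_le_left ε' R
    simp only [hη_def]; linarith
  have hηR : η ≤ R := by
    have h1 := min_le_right ε (min ε' R); have h2 := min_le_right ε' R
    simp only [hη_def]; linarith
  obtain ⟨δ, hδ, hδprop⟩ := hcoer η hη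
  obtain ⟨c, hc_def⟩ : ∃ c : ℝ, c = -α (-(δ/2)) := ⟨_, rfl⟩
  have hc : 0 < c := by
    have : α (-(δ/2)) < α 0 := hαm (by linarith)
    rw [hα0] at this; rw [hc_def]; linarith
  obtain ⟨b, hb_def⟩ : ∃ b : ℝ, b = min (c / M) (min (δ / (2 * M * T)) (η / T)) := ⟨_, rfl⟩
  have hb : 0 < b := by
    rw [hb_def]
    exact lt_min (by positivity) (lt_min (by positivity) (by positivity))
  obtain ⟨h₄, hh₄pos, hh₄⟩ := Metric.continuousAt_iff.mp (hρc.continuousAt (x := 0)) b hb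
  refine ⟨min h₁ (min h₂ (min h₃ h₄)), ⟨lt_min hh₁.1 (lt_min hh₂.1 (lt_min hh₃.1 hh₄pos)),
    le_trans (min_le_left _ _) hh₁.2⟩, ?_⟩
  intro h hh
  have hh0 : 0 < h := hh.1
  have hhT : h ≤ T := le_trans (le_of_lt (lt_of_lt_of_le hh.2 (min_le_left _ _))) hh₁.2
  have hh1 : h ∈ Set.Ioo (0:ℝ) h₁ := ⟨hh0, lt_of_lt_of_le hh.2 (min_le_left _ _)⟩
  have hh2 : h ∈ Set.Ioo (0:ℝ) h₂ :=
    ⟨hh0, lt_of_lt_of_le hh.2 (le_trans (min_le_right _ _) (min_le_left _ _))⟩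
  have hh3 : h ∈ Set.Ioo (0:ℝ) h₃ :=
    ⟨hh0, lt_of_lt_of_le hh.2 (le_trans (min_le_right _ _)
      (le_trans (min_le_right _ _) (min_le_left _ _)))⟩
  have hh4 : h < h₄ := lt_of_lt_of_le hh.2 (le_trans (min_le_right _ _)
    (le_trans (min_le_right _ _) (min_le_right _ _)))
  have hρh_pos : 0 < ρ h := by
    have := hρm (Set.self_mem_Ici) (Set.mem_Ici.mpr hh0.le) hh0
    rwa [hρ0] at this
  have hρhb : ρ h < b := by
    have hd : dist h 0 < h₄ := by
      rw [Real.dist_eq, sub_zero, abs_of_pos hh0]; exact hh4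
    have := hh₄ hd
    rwa [Real.dist_eq, hρ0, sub_zero, abs_of_pos hρh_pos] at this
  rw [hb_def] at hρhb
  have hAc : M * ρ h ≤ c := by
    have h1 : ρ h < c / M := lt_of_lt_of_le hρhb (min_le_left _ _)
    rw [lt_div_iff₀ hM] at h1; nlinarith
  have hAδ : M * (h * ρ h) ≤ δ / 2 := by
    have h1 : ρ h < δ / (2 * M * T) := lt_of_lt_of_le hρhb
      (le_trans (min_le_right _ _) (min_le_left _ _))
    rw [lt_div_iff₀ (by positivity)] at h1
    nlinarith [mul_le_mul_of_nonneg_right hhT hρh_pos.le]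
  have hAη : h * ρ h ≤ η := by
    have h1 : ρ h < η / T := lt_of_lt_of_le hρhb
      (le_trans (min_le_right _ _) (min_le_right _ _))
    rw [lt_div_iff₀ hT] at h1
    nlinarith [mul_le_mul_of_nonneg_right hhT hρh_pos.le]
  -- key: sublevel set is in the η-neighbourhood of C
  have key : ∀ x ∈ 𝒳, -δ ≤ s h x → Metric.infDist x C ≤ η := by
    intro x hx hs
    by_contra hcon
    exact absurd (hδprop h hh1 x hx (lt_of_not_ge hcon)) (not_lt.mpr hs)
  refine ⟨{x | x ∈ 𝒳 ∧ -δ ≤ s h x}, fun x hx => hx.1, ?_, ?_, ?_⟩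
  · -- C ⊆ Ch
    intro x hxC
    refine ⟨hCX hxC, ?_⟩
    have hxcl : x ∈ closure C := subset_closure hxC
    rw [closure_eq_interior_union_frontier] at hxcl
    rcases hxcl with hxi | hxf
    · have := hpos h hh1 x hxi; linarith
    · have := hzero h hh1 x hxf; linarith
  · -- Ch ⊆ cthickening R C
    intro x hx
    exact (mem_cth hCne hR.le).mpr (le_trans (key x hx.1 hx.2) hηR)
  · -- invariance
    rintro x ⟨hx𝒳, hxs⟩
    have hxd : Metric.infDist x C ≤ η := key x hx𝒳 hxs
    have hxε : x ∈ 𝒳 ∩ Metric.cthickening ε C :=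
      ⟨hx𝒳, (mem_cth hCne hε.le).mpr (by linarith)⟩
    have hxε' : x ∈ 𝒳 ∩ Metric.cthickening ε' C :=
      ⟨hx𝒳, (mem_cth hCne hε'.le).mpr (by linarith)⟩
    obtain ⟨hFdec, hF𝒳⟩ := hdec h hh1 x hx𝒳
    have hFe𝒳 : Fe h (x, k h x) ∈ 𝒳 := hadm h hh3 x hx𝒳
    have hFecons : ‖Fe h (x, k h x) - F h (x, k h x)‖ ≤ h * ρ h := hcons h hh2 x hxε'
    -- lower bound for s at F
    have hsF : -δ ≤ s h (F h (x, k h x)) := by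
      by_cases hxC : x ∈ C
      · have := hclassK h hh1 x hxC; linarith
      · have hsx : s h x < 0 := hneg h hh1 x ⟨hx𝒳, hxC⟩
        have h1 : α (s h x) < α 0 := hαm hsx
        rw [hα0] at h1
        have h2 : h * α (s h x) ≤ 0 := mul_nonpos_of_nonneg_of_nonpos hh0.le h1.le
        linarith
    have hFd : Metric.infDist (F h (x, k h x)) C ≤ η := key _ hF𝒳 hsF
    have hFε : F h (x, k h x) ∈ 𝒳 ∩ Metric.cthickening ε C :=
      ⟨hF𝒳, (mem_cth hCne hε.le).mpr (by linarith)⟩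
    have hFed : Metric.infDist (Fe h (x, k h x)) C ≤ η + h * ρ h := by
      calc Metric.infDist (Fe h (x, k h x)) C
          ≤ Metric.infDist (F h (x, k h x)) C + dist (Fe h (x, k h x)) (F h (x, k h x)) :=
            Metric.infDist_le_infDist_add_dist
        _ ≤ η + h * ρ h := by rw [dist_eq_norm]; exact add_le_add hFd hFecons
    have hFeε : Fe h (x, k h x) ∈ 𝒳 ∩ Metric.cthickening ε C :=
      ⟨hFe𝒳, (mem_cth hCne hε.le).mpr (by linarith)⟩
    have hlipFe := hlip h hh1 _ hFeε _ hFε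
    have hsFe_lb : s h (F h (x, k h x)) - M * (h * ρ h) ≤ s h (Fe h (x, k h x)) := by
      have h1 : |s h (Fe h (x, k h x)) - s h (F h (x, k h x))| ≤ M * (h * ρ h) := by
        refine le_trans hlipFe ?_
        exact mul_le_mul_of_nonneg_left hFecons hM.le
      have := abs_le.mp h1
      linarith [this.1]
    refine ⟨hFe𝒳, ?_⟩
    by_cases hxC : x ∈ C
    · have := hclassK h hh1 x hxC
      linarith
    · have hsx : s h x < 0 := hneg h hh1 x ⟨hx𝒳, hxC⟩
      by_cases hhalf : s h x ≤ -(δ/2)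
      · have hα1 : α (s h x) ≤ α (-(δ/2)) := hαm.le_iff_le.mpr hhalf
        have hα2 : h * α (s h x) ≤ h * α (-(δ/2)) :=
          mul_le_mul_of_nonneg_left hα1 hh0.le
        have hMc : M * (h * ρ h) ≤ h * c := by
          calc M * (h * ρ h) = h * (M * ρ h) := by ring
            _ ≤ h * c := mul_le_mul_of_nonneg_left hAc hh0.le
        have heq : h * α (-(δ/2)) = -(h * c) := by rw [hc_def]; ring
        linarith
      · push_neg at hhalf
        have h1 : α (s h x) < α 0 := hαm hsx
        rw [hα0] at h1
        have h2 : h * α (s h x) ≤ 0 := mul_nonpos_of_nonneg_of_nonpos hh0.le h1.le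
        linarith
end

section
/- Let 𝒳 ⊆ ℝⁿ be open, C ⊆ 𝒳 nonempty, s : ℝⁿ → ℝ, α : ℝ → ℝ strictly increasing with α(0) = 0, k : 𝒳 → ℝᵐ, F, Fᵉ : 𝒳 × ℝᵐ → ℝⁿ, and constants h, M, ε, R, R′, δ, Δ > 0 and e ≥ 0. Assume: (1) s > 0 on interior(C), s = 0 on frontier(C), and s < 0 on 𝒳 \ C; (2) h·α(s(x)) ≤ s(x) for all x ∈ C; (3) |s(a) − s(b)| ≤ M‖a − b‖ for all a, b ∈ 𝒳 ∩ (C ⊕ B̄_ε); (4) for all x ∈ 𝒳: d_C(x) > R′/2 implies s(x) < −δ, and d_C(x) > δ/(2M) implies s(x) < −Δ; (5) for all x ∈ 𝒳: s(F(x, k(x))) − s(x) ≥ −h·α(s(x)), F(x, k(x)) ∈ 𝒳, and Fᵉ(x, k(x)) ∈ 𝒳; (6) ‖Fᵉ(x, k(x)) − F(x, k(x))‖ ≤ e for all x ∈ 𝒳 ∩ (C ⊕ B̄_ε); (7) R′ ≤ min(ε, R), e ≤ min(R′/2, δ/(2M)), and M·e ≤ −h·α(−Δ). Then the set Ω = {x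 ∈ 𝒳 : s(x) ≥ −δ} satisfies C ⊆ Ω ⊆ C ⊕ B̄_R, and Fᵉ(x, k(x)) ∈ Ω for every x ∈ Ω. -/
lemma mem_cth_of_infDist_le {X : Type*} [PseudoMetricSpace X] {s : Set X}
    (hs : s.Nonempty) {δ : ℝ} {x : X} (hd : Metric.infDist x s ≤ δ) :
    x ∈ Metric.cthickening δ s := by
  rw [Metric.mem_cthickening_iff]
  rw [← ENNReal.ofReal_toReal (Metric.infEdist_ne_top hs)]
  exact ENNReal.ofReal_le_ofReal hd

theorem stmt4 {n m : ℕ} (𝒳 : Set (EuclideanSpace ℝ (Fin n))) (hXopen : IsOpen 𝒳)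
    (C : Set (EuclideanSpace ℝ (Fin n))) (hCX : C ⊆ 𝒳) (hCne : C.Nonempty)
    (s : EuclideanSpace ℝ (Fin n) → ℝ)
    (α : ℝ → ℝ) (hαm : StrictMono α) (hα0 : α 0 = 0)
    (k : EuclideanSpace ℝ (Fin n) → EuclideanSpace ℝ (Fin m))
    (F Fe : EuclideanSpace ℝ (Fin n) × EuclideanSpace ℝ (Fin m) →
      EuclideanSpace ℝ (Fin n))
    (h M ε R R' δ Δ : ℝ) (hh : 0 < h) (hM : 0 < M) (hε : 0 < ε) (hR : 0 < R)
    (hR' : 0 < R') (hδ : 0 < δ) (hΔ : 0 < Δ) (e : ℝ) (he : 0 ≤ e)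
    -- (1)
    (hpos : ∀ x ∈ interior C, 0 < s x)
    (hzero : ∀ x ∈ frontier C, s x = 0)
    (hneg : ∀ x ∈ 𝒳 \ C, s x < 0)
    -- (2)
    (hclassK : ∀ x ∈ C, h * α (s x) ≤ s x)
    -- (3)
    (hlip : ∀ a ∈ 𝒳 ∩ Metric.cthickening ε C, ∀ b ∈ 𝒳 ∩ Metric.cthickening ε C,
      |s a - s b| ≤ M * ‖a - b‖)
    -- (4)
    (hcoer1 : ∀ x ∈ 𝒳, Metric.infDist x C > R' / 2 → s x < -δ)
    (hcoer2 : ∀ x ∈ 𝒳, Metric.infDist x C > δ / (2 * M) → s x < -Δ)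
    -- (5)
    (hdec : ∀ x ∈ 𝒳, s (F (x, k x)) - s x ≥ -(h * α (s x)))
    (hFX : ∀ x ∈ 𝒳, F (x, k x) ∈ 𝒳)
    (hFeX : ∀ x ∈ 𝒳, Fe (x, k x) ∈ 𝒳)
    -- (6)
    (hcons : ∀ x ∈ 𝒳 ∩ Metric.cthickening ε C, ‖Fe (x, k x) - F (x, k x)‖ ≤ e)
    -- (7)
    (hR'le : R' ≤ min ε R) (hele : e ≤ min (R' / 2) (δ / (2 * M)))
    (hMe : M * e ≤ -(h * α (-Δ))) :
    C ⊆ {x ∈ 𝒳 | s x ≥ -δ} ∧ {x ∈ 𝒳 | s x ≥ -δ} ⊆ Metric.cthickening R C ∧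
      ∀ x ∈ {x ∈ 𝒳 | s x ≥ -δ}, Fe (x, k x) ∈ {x ∈ 𝒳 | s x ≥ -δ} := by

  have hsC : ∀ c ∈ C, 0 ≤ s c := by
    intro c hc
    by_cases hci : c ∈ interior C
    · exact (hpos c hci).le
    · exact (hzero c ⟨subset_closure hc, hci⟩).ge
  have hΩC : C ⊆ {x ∈ 𝒳 | s x ≥ -δ} := fun x hx =>
    ⟨hCX hx, le_trans (by linarith) (hsC x hx)⟩
  have hinfx : ∀ x ∈ 𝒳, s x ≥ -δ → Metric.infDist x C ≤ R' / 2 := by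
    intro x hx hs
    by_contra hgt
    exact absurd (hcoer1 x hx (lt_of_not_ge hgt)) (by linarith)
  have hR'ε : R' ≤ ε := le_trans hR'le (min_le_left _ _)
  have hR'R : R' ≤ R := le_trans hR'le (min_le_right _ _)
  have heR' : e ≤ R' / 2 := le_trans hele (min_le_left _ _)
  have heδ : e ≤ δ / (2 * M) := le_trans hele (min_le_right _ _)
  have hMeδ : M * e ≤ δ / 2 := by
    have := mul_le_mul_of_nonneg_left heδ hM.le
    calc M * e ≤ M * (δ / (2 * M)) := this
      _ = δ / 2 := by field_simp
  refine ⟨hΩC, ?_, ?_⟩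
  · rintro x ⟨hxX, hsx⟩
    have h1 := hinfx x hxX hsx
    exact mem_cth_of_infDist_le hCne (by linarith)
  · rintro x ⟨hxX, hsx⟩
    set xp := F (x, k x) with hxp
    set xe := Fe (x, k x) with hxe
    have hxpX : xp ∈ 𝒳 := hFX x hxX
    have hxeX : xe ∈ 𝒳 := hFeX x hxX
    have hxth : x ∈ 𝒳 ∩ Metric.cthickening ε C := by
      refine ⟨hxX, mem_cth_of_infDist_le hCne ?_⟩
      have := hinfx x hxX hsx
      linarith
    have hdecx := hdec x hxX
    -- lower bound on s xp in all cases
    have hCase : ∀ y, y ∈ 𝒳 → 0 ≤ s y → 0 ≤ s (F (y, k y)) := by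
      intro y hyX hsy
      have hyC : y ∈ C := by
        by_contra hyc
        exact absurd (hneg y ⟨hyX, hyc⟩) (not_lt.2 hsy)
      have := hclassK y hyC
      have := hdec y hyX
      linarith
    have hsxpδ : -δ ≤ s xp := by
      rcases le_or_gt 0 (s x) with h0 | h0
      · have := hCase x hxX h0
        linarith
      · have : α (s x) ≤ 0 := by
          have := hαm.monotone h0.le
          rw [hα0] at this; exact this
        nlinarith
    have hinfxp : Metric.infDist xp C ≤ R' / 2 := hinfx xp hxpX hsxpδ
    have hxpth : xp ∈ 𝒳 ∩ Metric.cthickening ε C := by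
      exact ⟨hxpX, mem_cth_of_infDist_le hCne (by linarith)⟩
    have hdxe : dist xe xp ≤ e := by
      rw [dist_eq_norm]; exact hcons x hxth
    have hinfxe : Metric.infDist xe C ≤ Metric.infDist xp C + e := by
      have := Metric.infDist_le_infDist_add_dist (x := xe) (y := xp) (s := C)
      linarith
    have hxeth : xe ∈ 𝒳 ∩ Metric.cthickening ε C := by
      exact ⟨hxeX, mem_cth_of_infDist_le hCne (by linarith)⟩
    have hsdiff : |s xe - s xp| ≤ M * e := by
      have h1 := hlip xe hxeth xp hxpth
      have h2 : M * ‖xe - xp‖ ≤ M * e := by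
        rw [← dist_eq_norm]
        exact mul_le_mul_of_nonneg_left hdxe hM.le
      linarith
    have hsdiff' : s xp - M * e ≤ s xe := by
      have := abs_le.1 hsdiff
      linarith [this.1]
    refine ⟨hxeX, ?_⟩
    rcases le_or_gt 0 (s x) with h0 | h0
    · have := hCase x hxX h0
      show -δ ≤ s xe
      linarith
    · rcases le_or_gt (s x) (-Δ) with h1 | h1
      · -- s x ≤ -Δ: big decrease margin
        have hα1 : α (s x) ≤ α (-Δ) := hαm.monotone h1
        have : M * e ≤ -(h * α (s x)) := by nlinarith
        show -δ ≤ s xe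
        linarith
      · -- -Δ < s x < 0
        have hsxp_ge : s x ≤ s xp := by
          have : α (s x) ≤ 0 := by
            have := hαm.monotone h0.le
            rw [hα0] at this; exact this
          nlinarith
        have hinfxp2 : Metric.infDist xp C ≤ δ / (2 * M) := by
          by_contra hgt
          have := hcoer2 xp hxpX (lt_of_not_ge hgt)
          linarith
        have hinfxe2 : Metric.infDist xe C ≤ δ / (2 * M) + e := by linarith
        have hbound : -s xe / M ≤ Metric.infDist xe C := by
          rw [le_iff_forall_pos_le_add]
          intro η hη
          obtain ⟨c, hcC, hcd⟩ := (Metric.infDist_lt_iff hCne).1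
            (lt_add_of_pos_right (Metric.infDist xe C) hη)
          have hcth : c ∈ 𝒳 ∩ Metric.cthickening ε C :=
            ⟨hCX hcC, Metric.self_subset_cthickening C hcC⟩
          have hl := hlip xe hxeth c hcth
          have hsc := hsC c hcC
          rw [← dist_eq_norm] at hl
          have := abs_le.1 hl
          have h3 : -s xe ≤ M * dist xe c := by linarith [this.1]
          have h4 : -s xe / M ≤ dist xe c := by
            rw [div_le_iff₀ hM]
            linarith [mul_comm (dist xe c) M]
          linarith
        show -δ ≤ s xe
        have h5 : -s xe ≤ M * Metric.infDist xe C := by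
          have := mul_le_mul_of_nonneg_left hbound hM.le
          rw [mul_div_cancel₀ _ hM.ne'] at this
          linarith
        have h6 : M * Metric.infDist xe C ≤ M * (δ / (2 * M) + e) :=
          mul_le_mul_of_nonneg_left hinfxe2 hM.le
        have h7 : M * (δ / (2 * M) + e) = δ / 2 + M * e := by
          rw [mul_add]; field_simp
        linarith
end

section
/- Let w : ℝⁿ → ℝⁿ, x ∈ ℝⁿ, and ε, h, C_L, M, L > 0. Suppose ‖w(z) − w(x)‖ ≤ C_L·‖z − x‖ for every z in the closed ball of radius ε around x. Let φ : [0,h] → ℝⁿ be differentiable with φ(0) = x, φ′(t) = w(φ(t)) and ‖φ(t) − x‖ ≤ min(M·t, ε) for all t ∈ [0,h]. Let z₁,…,z_p lie in the closed ball of radius ε around x with ‖zᵢ − x‖ ≤ L·h for each i, and let b₁,…,b_p ≥ 0 with Σᵢ bᵢ = 1. Then ‖φ(h) − (x + h Σ_{i=1}^{p} bᵢ w(zᵢ))‖ ≤ h·(C_L·M·h + C_L·L·h). -/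
theorem stmt9 {n : ℕ} (w : EuclideanSpace ℝ (Fin n) → EuclideanSpace ℝ (Fin n))
    (x : EuclideanSpace ℝ (Fin n)) (ε h CL M L : ℝ)
    (hε : 0 < ε) (hh : 0 < h) (hCL : 0 < CL) (hM : 0 < M) (hLpos : 0 < L)
    (hlip : ∀ z ∈ Metric.closedBall x ε, ‖w z - w x‖ ≤ CL * ‖z - x‖)
    (φ : ℝ → EuclideanSpace ℝ (Fin n)) (hφ0 : φ 0 = x)
    (hderiv : ∀ t ∈ Set.Icc (0:ℝ) h, HasDerivWithinAt φ (w (φ t)) (Set.Icc (0:ℝ) h) t)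
    (hφbd : ∀ t ∈ Set.Icc (0:ℝ) h, ‖φ t - x‖ ≤ min (M * t) ε)
    (p : ℕ) (z : ℕ → EuclideanSpace ℝ (Fin n))
    (hz : ∀ i ∈ Finset.range p, z i ∈ Metric.closedBall x ε ∧ ‖z i - x‖ ≤ L * h)
    (b : ℕ → ℝ) (hb : ∀ i ∈ Finset.range p, 0 ≤ b i)
    (hbsum : ∑ i ∈ Finset.range p, b i = 1) :
    ‖φ h - (x + h • ∑ i ∈ Finset.range p, b i • w (z i))‖ ≤
      h * (CL * M * h + CL * L * h) := by
  -- ψ t = φ t - t • w x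
  set ψ : ℝ → EuclideanSpace ℝ (Fin n) := fun t => φ t - t • w x with hψ
  have hψderiv : ∀ t ∈ Set.Icc (0:ℝ) h,
      HasDerivWithinAt ψ (w (φ t) - w x) (Set.Icc (0:ℝ) h) t := by
    intro t ht
    exact (hderiv t ht).sub ((hasDerivWithinAt_id t _).smul_const (w x) |>.congr_deriv
      (by simp))
  have hbound : ∀ t ∈ Set.Ico (0:ℝ) h, ‖w (φ t) - w x‖ ≤ CL * (M * h) := by
    intro t ht
    have ht' : t ∈ Set.Icc (0:ℝ) h := Set.Ico_subset_Icc_self ht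
    have hmem : φ t ∈ Metric.closedBall x ε := by
      rw [Metric.mem_closedBall, dist_eq_norm]
      exact (hφbd t ht').trans (min_le_right _ _)
    have h1 : ‖φ t - x‖ ≤ M * h := by
      refine (hφbd t ht').trans ?_
      refine (min_le_left _ _).trans ?_
      exact mul_le_mul_of_nonneg_left ht'.2 hM.le
    calc ‖w (φ t) - w x‖ ≤ CL * ‖φ t - x‖ := hlip _ hmem
      _ ≤ CL * (M * h) := by nlinarith
  have key := norm_image_sub_le_of_norm_deriv_le_segment' hψderiv hbound h
    (Set.right_mem_Icc.2 hh.le)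
  have hψval : ψ h - ψ 0 = φ h - x - h • w x := by
    simp only [hψ, hφ0, zero_smul, sub_zero]
    abel
  rw [hψval] at key
  -- bound on the RK part
  have hsum : ‖(∑ i ∈ Finset.range p, b i • w (z i)) - w x‖ ≤ CL * L * h := by
    have : (∑ i ∈ Finset.range p, b i • w (z i)) - w x
        = ∑ i ∈ Finset.range p, b i • (w (z i) - w x) := by
      simp only [smul_sub, Finset.sum_sub_distrib, ← Finset.sum_smul, hbsum, one_smul]
    rw [this]
    calc ‖∑ i ∈ Finset.range p, b i • (w (z i) - w x)‖
        ≤ ∑ i ∈ Finset.range p, ‖b i • (w (z i) - w x)‖ := norm_sum_le _ _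
      _ ≤ ∑ i ∈ Finset.range p, b i * (CL * (L * h)) := by
          refine Finset.sum_le_sum fun i hi => ?_
          rw [norm_smul, Real.norm_eq_abs, abs_of_nonneg (hb i hi)]
          refine mul_le_mul_of_nonneg_left ?_ (hb i hi)
          calc ‖w (z i) - w x‖ ≤ CL * ‖z i - x‖ := hlip _ (hz i hi).1
            _ ≤ CL * (L * h) := by nlinarith [(hz i hi).2]
      _ = CL * L * h := by rw [← Finset.sum_mul, hbsum]; ring
  have h2 : ‖h • w x - h • ∑ i ∈ Finset.range p, b i • w (z i)‖ ≤ h * (CL * L * h) := by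
    rw [← smul_sub, norm_smul, Real.norm_eq_abs, abs_of_pos hh]
    have := mul_le_mul_of_nonneg_left (by simpa [norm_sub_rev] using hsum) hh.le
    linarith
  have tri : ‖φ h - (x + h • ∑ i ∈ Finset.range p, b i • w (z i))‖
      ≤ ‖φ h - x - h • w x‖ + ‖h • w x - h • ∑ i ∈ Finset.range p, b i • w (z i)‖ := by
    have : φ h - (x + h • ∑ i ∈ Finset.range p, b i • w (z i))
        = (φ h - x - h • w x) + (h • w x - h • ∑ i ∈ Finset.range p, b i • w (z i)) := by
      abel
    rw [this]; exact norm_add_le _ _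
  have hkey' : ‖φ h - x - h • w x‖ ≤ h * (CL * M * h) := by
    calc ‖φ h - x - h • w x‖ ≤ CL * (M * h) * (h - 0) := key
      _ = h * (CL * M * h) := by ring
  linarith
end

section
/- Let s : ℝⁿ → ℝ be twice continuously differentiable, let x, y ∈ ℝⁿ with x ≠ y, and let σ, μ ≥ 0. Suppose s(y) = 0, the gradient satisfies ∇s(y) = −‖∇s(y)‖₂ · (x − y)/‖x − y‖₂ with ‖∇s(y)‖₂ ≥ σ, and the second derivative (Hessian) satisfies ‖∇²s(ξ)‖ ≤ μ in operator norm for every ξ on the segment from y to x. Then s(x) ≤ −(σ − (μ/2)·‖x − y‖₂)·‖x − y‖₂. -/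
/-!
Along the segment, `g t = s (y + t • (x - y))` has `g 0 = 0`, `g' 0 = ⟪∇s y, x - y⟫ =
-‖∇s y‖ ‖x - y‖` because the gradient is anti-parallel to `x - y`, and `|g''| ≤ μ ‖x - y‖²`;
Taylor's theorem with Lagrange remainder on `[0, 1]` gives the bound.
-/

open Set AffineMap

theorem le_add_deriv_mul_add_of_iteratedDeriv_two_le {g : ℝ → ℝ} (hg : ContDiff ℝ 2 g)
    {a b M : ℝ} (hab : a < b) (hM : ∀ t ∈ Ioo a b, iteratedDeriv 2 g t ≤ M) :
    g b ≤ g a + deriv g a * (b - a) + M / 2 * (b - a) ^ 2 := by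
  obtain ⟨c, hc, hTaylor⟩ :=
    taylor_mean_remainder_lagrange_iteratedDeriv (n := 1) hab.ne hg.contDiffOn
  rw [uIoo_of_le hab.le] at hc
  have hderiv : derivWithin g (uIcc a b) a = deriv g a := by
    rw [uIcc_of_le hab.le]
    exact (hg.differentiable two_ne_zero a).derivWithin
      (uniqueDiffOn_Icc hab a (left_mem_Icc.mpr hab.le))
  have hpoly : taylorWithinEval g 1 (uIcc a b) a b = g a + deriv g a * (b - a) := by
    simp [taylor_within_apply, hderiv, mul_comm]
  rw [hpoly] at hTaylor
  norm_num at hTaylor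
  have hremainder := mul_le_mul_of_nonneg_right (hM c hc) (sq_nonneg (b - a))
  linarith

theorem iteratedDeriv_comp_lineMap {𝕜 E F : Type*} [NontriviallyNormedField 𝕜]
    [NormedAddCommGroup E] [NormedSpace 𝕜 E] [NormedAddCommGroup F] [NormedSpace 𝕜 F]
    {f : E → F} {n : WithTop ℕ∞} (hf : ContDiff 𝕜 n f) {k : ℕ} (hk : k ≤ n) (a b : E) (t : 𝕜) :
    iteratedDeriv k (f ∘ lineMap a b) t = iteratedFDeriv 𝕜 k f (lineMap a b t) fun _ => b - a := by
  set L : 𝕜 →L[𝕜] E := (ContinuousLinearMap.id 𝕜 𝕜).smulRight (b - a)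
  have hcomp : f ∘ lineMap a b = (fun z => f (z + a)) ∘ L := by
    ext s
    simp [L, lineMap_apply_module']
  have hshift : ContDiff 𝕜 n fun z => f (z + a) := hf.comp (contDiff_id.add contDiff_const)
  rw [iteratedDeriv_eq_iteratedFDeriv, hcomp, L.iteratedFDeriv_comp_right hshift t hk]
  simp [L, iteratedFDeriv_comp_add_right, lineMap_apply_module']

theorem le_add_fderiv_add_of_norm_iteratedFDeriv_two_le {E : Type*}
    [NormedAddCommGroup E] [NormedSpace ℝ E] {f : E → ℝ} (hf : ContDiff ℝ 2 f) {x y : E} {μ : ℝ}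
    (hμ : ∀ ξ ∈ segment ℝ y x, ‖iteratedFDeriv ℝ 2 f ξ‖ ≤ μ) :
    f x ≤ f y + fderiv ℝ f y (x - y) + μ / 2 * ‖x - y‖ ^ 2 := by
  have hg : ContDiff ℝ 2 (f ∘ lineMap y x) := hf.comp (contDiff_lineMap y x)
  have hsecond : ∀ t ∈ Ioo (0 : ℝ) 1, iteratedDeriv 2 (f ∘ lineMap y x) t ≤ μ * ‖x - y‖ ^ 2 := by
    intro t ht
    have hξ : lineMap y x t ∈ segment ℝ y x :=
      segment_eq_image_lineMap ℝ y x ▸ mem_image_of_mem _ (Ioo_subset_Icc_self ht)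
    rw [iteratedDeriv_comp_lineMap hf le_rfl]
    calc iteratedFDeriv ℝ 2 f (lineMap y x t) (fun _ => x - y)
        ≤ ‖iteratedFDeriv ℝ 2 f (lineMap y x t) (fun _ => x - y)‖ := Real.le_norm_self _
      _ ≤ ‖iteratedFDeriv ℝ 2 f (lineMap y x t)‖ * ∏ _ : Fin 2, ‖x - y‖ :=
        ContinuousMultilinearMap.le_opNorm _ _
      _ ≤ μ * ‖x - y‖ ^ 2 := by
        rw [Fin.prod_const]
        exact mul_le_mul_of_nonneg_right (hμ _ hξ) (by positivity)
  have hfirst : deriv (f ∘ lineMap y x) (0 : ℝ) = fderiv ℝ f y (x - y) := by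
    rw [← iteratedDeriv_one, iteratedDeriv_comp_lineMap hf one_le_two]
    simp
  have htaylor := le_add_deriv_mul_add_of_iteratedDeriv_two_le hg zero_lt_one hsecond
  simp only [Function.comp_apply, lineMap_apply_zero, lineMap_apply_one, hfirst] at htaylor
  linarith

theorem stmt10_general {n : ℕ} (s : EuclideanSpace ℝ (Fin n) → ℝ) (hs : ContDiff ℝ 2 s)
    (x y : EuclideanSpace ℝ (Fin n)) (σ μ : ℝ)
    (hsy : s y = 0)
    (hgrad : gradient s y = -(‖gradient s y‖ / ‖x - y‖) • (x - y))
    (hgradlb : σ ≤ ‖gradient s y‖)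
    (hhess : ∀ ξ ∈ segment ℝ y x, ‖iteratedFDeriv ℝ 2 s ξ‖ ≤ μ) :
    s x ≤ -(σ - μ / 2 * ‖x - y‖) * ‖x - y‖ := by
  have hslope : fderiv ℝ s y (x - y) = -(‖gradient s y‖ * ‖x - y‖) := by
    rw [← inner_gradient_left]
    conv_lhs => rw [hgrad, real_inner_smul_left, real_inner_self_eq_norm_sq]
    rw [neg_mul, div_mul_eq_mul_div, mul_comm, div_sq_cancel, mul_comm]
  have htaylor := le_add_fderiv_add_of_norm_iteratedFDeriv_two_le hs hhess
  rw [hsy, hslope] at htaylor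
  have hσr := mul_le_mul_of_nonneg_right hgradlb (norm_nonneg (x - y))
  linarith

theorem stmt10 {n : ℕ} (s : EuclideanSpace ℝ (Fin n) → ℝ) (hs : ContDiff ℝ 2 s)
    (x y : EuclideanSpace ℝ (Fin n)) (hxy : x ≠ y) (σ μ : ℝ) (hσ : 0 ≤ σ) (hμ : 0 ≤ μ)
    (hsy : s y = 0)
    (hgrad : gradient s y = -(‖gradient s y‖ / ‖x - y‖) • (x - y))
    (hgradlb : σ ≤ ‖gradient s y‖)
    (hhess : ∀ ξ ∈ segment ℝ y x, ‖iteratedFDeriv ℝ 2 s ξ‖ ≤ μ) :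
    s x ≤ -(σ - μ / 2 * ‖x - y‖) * ‖x - y‖ :=
  stmt10_general s hs x y σ μ hsy hgrad hgradlb hhess
end

section
/- Let 𝒳 ⊆ ℝⁿ, s : ℝⁿ → ℝ, and C = {y ∈ 𝒳 : s(y) ≥ 0}. Let α : ℝ → ℝ, h > 0, and ε, δ > 0, M > 0, e ≥ 0 with e ≤ ε and M·e ≤ δ. Suppose |s(a) − s(b)| ≤ M·‖a − b‖ for all a, b ∈ 𝒳 ∩ (C ⊕ B̄_ε). Let x ∈ C satisfy h·α(s(x)) ≤ s(x), and let w, wᵉ ∈ 𝒳 satisfy s(w) − s(x) ≥ −h·α(s(x)) and ‖wᵉ − w‖ ≤ e. Then w ∈ C, wᵉ ∈ 𝒳 ∩ (C ⊕ B̄_ε), and s(wᵉ) ≥ −δ. -/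
theorem stmt12 {n : ℕ} (𝒳 : Set (EuclideanSpace ℝ (Fin n)))
    (s : EuclideanSpace ℝ (Fin n) → ℝ)
    (C : Set (EuclideanSpace ℝ (Fin n))) (hC : C = {y ∈ 𝒳 | 0 ≤ s y})
    (α : ℝ → ℝ) (h ε δ M e : ℝ) (hh : 0 < h) (hε : 0 < ε) (hδ : 0 < δ) (hM : 0 < M)
    (he0 : 0 ≤ e) (heε : e ≤ ε) (hMe : M * e ≤ δ)
    (hlip : ∀ a ∈ 𝒳 ∩ Metric.cthickening ε C, ∀ b ∈ 𝒳 ∩ Metric.cthickening ε C,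
      |s a - s b| ≤ M * ‖a - b‖)
    (x : EuclideanSpace ℝ (Fin n)) (hx : x ∈ C) (hxα : h * α (s x) ≤ s x)
    (w we : EuclideanSpace ℝ (Fin n)) (hwX : w ∈ 𝒳) (hweX : we ∈ 𝒳)
    (hdec : s w - s x ≥ -(h * α (s x))) (hclose : ‖we - w‖ ≤ e) :
    w ∈ C ∧ we ∈ 𝒳 ∩ Metric.cthickening ε C ∧ -δ ≤ s we := by
  have hwC : w ∈ C := by
    rw [hC]
    exact ⟨hwX, by linarith⟩
  have hweth : we ∈ Metric.cthickening ε C := by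
    apply Metric.mem_cthickening_of_dist_le we w ε C hwC
    calc dist we w = ‖we - w‖ := by rw [dist_eq_norm]
    _ ≤ e := hclose
    _ ≤ ε := heε
  have hwth : w ∈ Metric.cthickening ε C :=
    Metric.self_subset_cthickening C hwC
  refine ⟨hwC, ⟨hweX, hweth⟩, ?_⟩
  have := hlip we ⟨hweX, hweth⟩ w ⟨hwX, hwth⟩
  have h2 : |s we - s w| ≤ δ := le_trans this (by nlinarith)
  have := abs_le.mp h2
  linarith
end

section
/- Let D ⊆ ℝⁿ, M > 0, and let s : ℝⁿ → ℝ satisfy |s(a) − s(b)| ≤ M·‖a − b‖ for all a, b ∈ D. Let α : ℝ → ℝ be strictly increasing with α(0) = 0, and let h > 0, δ > 0, Δ > 0, e ≥ 0 with M·e ≤ −h·α(−Δ). Let x ∈ ℝⁿ satisfy −δ ≤ s(x) < −Δ, and let w, wᵉ ∈ D satisfy s(w) − s(x) ≥ −h·α(s(x)) and ‖wᵉ − w‖ ≤ e. Then s(wᵉ) > s(x), and in particular s(wᵉ) ≥ −δ. -/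
theorem stmt14 {n : ℕ} (D : Set (EuclideanSpace ℝ (Fin n))) (M : ℝ) (hM : 0 < M)
    (s : EuclideanSpace ℝ (Fin n) → ℝ)
    (hlip : ∀ a ∈ D, ∀ b ∈ D, |s a - s b| ≤ M * ‖a - b‖)
    (α : ℝ → ℝ) (hαm : StrictMono α) (hα0 : α 0 = 0)
    (h δ Δ e : ℝ) (hh : 0 < h) (hδ : 0 < δ) (hΔ : 0 < Δ) (he0 : 0 ≤ e)
    (hMe : M * e ≤ -(h * α (-Δ)))
    (x : EuclideanSpace ℝ (Fin n)) (hxlb : -δ ≤ s x) (hxub : s x < -Δ)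
    (w we : EuclideanSpace ℝ (Fin n)) (hwD : w ∈ D) (hweD : we ∈ D)
    (hdec : s w - s x ≥ -(h * α (s x))) (hclose : ‖we - w‖ ≤ e) :
    s x < s we ∧ -δ ≤ s we := by
  have h1 : |s we - s w| ≤ M * ‖we - w‖ := hlip we hweD w hwD
  have h2 : M * ‖we - w‖ ≤ M * e := by nlinarith
  have h3 : s we ≥ s w - M * e := by
    have := abs_le.mp (h1.trans h2)
    linarith [this.1]
  have h4 : α (s x) < α (-Δ) := hαm hxub
  have h5 : -(h * α (s x)) > -(h * α (-Δ)) := by nlinarith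
  have hlt : s x < s we := by linarith
  exact ⟨hlt, le_of_lt (lt_of_le_of_lt hxlb hlt)⟩
end

section
/- Let ℓ, γ ∈ ℕ with γ ≥ 1, and let A : (ℝ^ℓ)^γ → (ℝ^ℓ)^γ be the block shift operator defined by (Ax)_i = x_{i+1} for 1 ≤ i ≤ γ−1 and (Ax)_γ = 0. Fix p ∈ ℕ with p ≥ 1, h ∈ ℝ, and coefficients a_{i,j} ∈ ℝ (1 ≤ j < i ≤ p). For any x ∈ (ℝ^ℓ)^γ and any vectors r₁,…,r_{p−1} ∈ (ℝ^ℓ)^γ, define z₁ = x and zᵢ = x + h Σ_{j=1}^{i−1} a_{i,j}(A z_j + r_j) for 2 ≤ i ≤ p. Then there exist real polynomials ρ₁,…,ρ_p with deg ρᵢ ≤ i−1 and, for each i and each 1 ≤ j ≤ i−1, real polynomials σ_{i,j} with deg σ_{i,j} ≤ i−j−1, all depending only on h and the coefficients a_{i,j} (not on x or the r_j), such that zᵢ = ρᵢ(A)x + Σ_{j=1}^{i−1} σ_{i,j}(A) r_j for every i ∈ {1,…,p}. -/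
/-! The stage `zᵢ` is affine in `x` and the `r_k`, with coefficients polynomial in `A`: they are
the stages, computed in `ℝ[X]`, of the scalar problems `q' = X q` with initial value `1` and
`q' = X q + δ_{jk}` with initial value `0`, evaluated at `X = A`. A stage applies `X` once to
earlier stages, which gives `deg ρᵢ ≤ i`; the forcing `δ_{jk}` first enters at stage `k + 1`,
which gives `deg σᵢₖ ≤ i - k - 1`. -/

/-- The block shift operator `(Ax)_i = x_{i+1}` (0-indexed, `(Ax)_{γ−1} = 0`). -/
noncomputable def blockShift (ℓ γ : ℕ) :
    Module.End ℝ (Fin γ → EuclideanSpace ℝ (Fin ℓ)) where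
  toFun x := fun i => if hi : (i : ℕ) + 1 < γ then x ⟨(i : ℕ) + 1, hi⟩ else 0
  map_add' x y := by funext i; by_cases hi : (i : ℕ) + 1 < γ <;> simp [hi]
  map_smul' c x := by funext i; by_cases hi : (i : ℕ) + 1 < γ <;> simp [hi]

open Polynomial

section RungeKutta

variable {S : Type*} [AddCommGroup S] [Module ℝ S] (v : ℕ → S → S) (a : ℕ → ℕ → ℝ) (h : ℝ) (x : S)

theorem rkStages_apply (i : ℕ) :
    rkStages v a h x i = x + h • ∑ j ∈ Finset.range i, a i j • v j (rkStages v a h x j) := by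
  rw [rkStages, Nat.strongRecOn, WellFounded.fix_eq,
    ← Finset.sum_attach (Finset.range i) (fun j => a i j • v j (rkStages v a h x j))]
  rfl

theorem rkStages_mem {v} (M : ℕ → Submodule ℝ S) (hx : ∀ i, x ∈ M i)
    (hv : ∀ i, ∀ j < i, ∀ s ∈ M j, v j s ∈ M i) (i : ℕ) : rkStages v a h x i ∈ M i := by
  induction i using Nat.strong_induction_on with
  | _ i ih =>
    rw [rkStages_apply]
    refine add_mem (hx i) (Submodule.smul_mem _ _ (Submodule.sum_mem _ fun j hj => ?_))
    have hji := Finset.mem_range.mp hj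
    exact Submodule.smul_mem _ _ (hv i j hji _ (ih j hji))

end RungeKutta

theorem Polynomial.X_mul_mem_degreeLT {R : Type*} [Semiring R] {n : ℕ} {q : R[X]}
    (hq : q ∈ degreeLT R n) : X * q ∈ degreeLT R (n + 1) := by
  rw [mem_degreeLT] at hq ⊢
  calc (X * q).degree ≤ 1 + q.degree := (degree_mul_le _ _).trans (add_le_add_left degree_X_le _)
    _ < 1 + n := WithBot.add_lt_add_left (by simp) hq
    _ = ↑(n + 1) := by push_cast; ring

noncomputable def rkStagePoly (a : ℕ → ℕ → ℝ) (h : ℝ) (c : ℝ[X]) (e : ℕ → ℝ[X]) : ℕ → ℝ[X] :=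
  rkStages (fun j q => X * q + e j) a h c

section StagePoly

variable (a : ℕ → ℕ → ℝ) (h : ℝ)

theorem aeval_rkStagePoly_apply {S : Type*} [AddCommGroup S] [Module ℝ S] (A : Module.End ℝ S)
    (c : ℝ[X]) (e : ℕ → ℝ[X]) (y : S) (i : ℕ) :
    aeval A (rkStagePoly a h c e i) y = aeval A c y + h • ∑ j ∈ Finset.range i,
      a i j • (A (aeval A (rkStagePoly a h c e j) y) + aeval A (e j) y) := by
  rw [rkStagePoly, rkStages_apply]
  simp only [smul_add, map_add, map_smul, map_sum, map_mul, aeval_X, LinearMap.add_apply,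
    LinearMap.smul_apply, LinearMap.coe_sum, Finset.sum_apply, Module.End.mul_apply]

theorem degree_rkStagePoly_one_zero_le (i : ℕ) : (rkStagePoly a h 1 0 i).degree ≤ i := by
  rw [← mem_degreeLE, ← degreeLT_succ_eq_degreeLE]
  refine rkStages_mem _ _ _ (fun i => degreeLT ℝ (i + 1)) (fun i => ?_) (fun i j hji q hq => ?_) i
  · rw [mem_degreeLT, degree_one]
    exact_mod_cast i.succ_pos
  · simpa using degreeLT_mono (by omega) (X_mul_mem_degreeLT hq)

theorem degree_rkStagePoly_zero_single_le {k i : ℕ} (hki : k < i) :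
    (rkStagePoly a h 0 (Pi.single k 1) i).degree ≤ (i - k - 1 : ℕ) := by
  rw [← mem_degreeLE, ← degreeLT_succ_eq_degreeLE, Nat.sub_add_cancel (by omega)]
  refine rkStages_mem _ _ _ (fun i => degreeLT ℝ (i - k)) (fun i => zero_mem _)
    (fun i j hji q hq => ?_) i
  rcases lt_or_ge k j with hkj | hjk
  · rw [Pi.single_eq_of_ne hkj.ne', add_zero]
    exact degreeLT_mono (by omega) (X_mul_mem_degreeLT hq)
  · have hq0 : q = 0 := by
      rwa [Nat.sub_eq_zero_of_le hjk, mem_degreeLT, Nat.cast_zero, Nat.WithBot.lt_zero_iff,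
        degree_eq_bot] at hq
    rw [hq0, mul_zero, zero_add, Pi.single_apply]
    split_ifs with hjk'
    · rw [mem_degreeLT, degree_one]
      exact_mod_cast (by omega : 0 < i - k)
    · exact zero_mem _

end StagePoly

/-- Summing over `range N` for an arbitrary `N ≥ i`, rather than over `range i`, is what lets the
induction close: the terms with `i ≤ k` vanish without being treated separately. -/
theorem rkStages_affine_eq_sum_aeval {S : Type*} [AddCommGroup S] [Module ℝ S]
    (A : Module.End ℝ S) (a : ℕ → ℕ → ℝ) (h : ℝ) (x : S) (r : ℕ → S) {N i : ℕ} (hi : i ≤ N) :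
    rkStages (fun j z => A z + r j) a h x i =
      aeval A (rkStagePoly a h 1 0 i) x +
        ∑ k ∈ Finset.range N, aeval A (rkStagePoly a h 0 (Pi.single k 1) i) (r k) := by
  induction i using Nat.strong_induction_on with
  | _ i ih =>
    have hsingle : ∀ j ∈ Finset.range i,
        ∑ k ∈ Finset.range N, aeval A ((Pi.single k 1 : ℕ → ℝ[X]) j) (r k) = r j := by
      intro j hj
      have hjN : j ∈ Finset.range N := Finset.range_subset_range.mpr hi hj
      rw [Finset.sum_eq_single_of_mem j hjN fun k _ hkj => by
        rw [Pi.single_eq_of_ne (Ne.symm hkj), map_zero, LinearMap.zero_apply]]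
      rw [Pi.single_eq_same, map_one, Module.End.one_apply]
    have hsigma : ∑ k ∈ Finset.range N, aeval A (rkStagePoly a h 0 (Pi.single k 1) i) (r k) =
        h • ∑ j ∈ Finset.range i, a i j • (A (∑ k ∈ Finset.range N,
          aeval A (rkStagePoly a h 0 (Pi.single k 1) j) (r k)) + r j) := by
      rw [Finset.sum_congr rfl fun k _ => aeval_rkStagePoly_apply a h A 0 _ (r k) i]
      simp only [map_zero, LinearMap.zero_apply, zero_add, ← Finset.smul_sum]
      rw [Finset.sum_comm]
      refine congrArg _ (Finset.sum_congr rfl fun j hj => ?_)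
      rw [← hsingle j hj, map_sum, ← Finset.smul_sum, ← Finset.sum_add_distrib]
    rw [rkStages_apply, aeval_rkStagePoly_apply, hsigma,
      Finset.sum_congr rfl fun j hj => by
        rw [ih j (Finset.mem_range.mp hj) ((Finset.mem_range.mp hj).le.trans hi)]]
    simp only [map_one, Module.End.one_apply, Pi.zero_apply, map_zero, LinearMap.zero_apply,
      add_zero, map_add, smul_add, Finset.sum_add_distrib]
    abel

theorem stmt16_general (ℓ γ : ℕ) (p : ℕ) (h : ℝ) (a : ℕ → ℕ → ℝ) :
    ∃ ρ : ℕ → Polynomial ℝ, ∃ σ : ℕ → ℕ → Polynomial ℝ,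
      (∀ i < p, (ρ i).degree ≤ (i : ℕ)) ∧
      (∀ i < p, ∀ j < i, (σ i j).degree ≤ ((i - j - 1 : ℕ) : ℕ)) ∧
      ∀ x : Fin γ → EuclideanSpace ℝ (Fin ℓ),
        ∀ r : ℕ → (Fin γ → EuclideanSpace ℝ (Fin ℓ)),
        ∀ i < p,
          rkStages (fun j z => blockShift ℓ γ z + r j) a h x i =
            (Polynomial.aeval (blockShift ℓ γ) (ρ i)) x +
              ∑ j ∈ Finset.range i, (Polynomial.aeval (blockShift ℓ γ) (σ i j)) (r j) :=
  ⟨rkStagePoly a h 1 0, fun i j => rkStagePoly a h 0 (Pi.single j 1) i,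
    fun i _ => degree_rkStagePoly_one_zero_le a h i,
    fun _ _ _ hji => degree_rkStagePoly_zero_single_le a h hji,
    fun x r _ _ => rkStages_affine_eq_sum_aeval _ a h x r le_rfl⟩

theorem stmt16 (ℓ γ : ℕ) (hγ : 1 ≤ γ) (p : ℕ) (hp : 1 ≤ p) (h : ℝ) (a : ℕ → ℕ → ℝ) :
    ∃ ρ : ℕ → Polynomial ℝ, ∃ σ : ℕ → ℕ → Polynomial ℝ,
      (∀ i < p, (ρ i).degree ≤ (i : ℕ)) ∧
      (∀ i < p, ∀ j < i, (σ i j).degree ≤ ((i - j - 1 : ℕ) : ℕ)) ∧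
      ∀ x : Fin γ → EuclideanSpace ℝ (Fin ℓ),
        ∀ r : ℕ → (Fin γ → EuclideanSpace ℝ (Fin ℓ)),
        ∀ i < p,
          rkStages (fun j z => blockShift ℓ γ z + r j) a h x i =
            (Polynomial.aeval (blockShift ℓ γ) (ρ i)) x +
              ∑ j ∈ Finset.range i, (Polynomial.aeval (blockShift ℓ γ) (σ i j)) (r j) :=
  stmt16_general ℓ γ p h a
end
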